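/- arXiv:2211.09917 — 3 statements merged into one kernel-verified Lean document; each statement's English description precedes it below -/
import Mathlib

section
/- Let P ∈ ℝ^{n×n} be symmetric positive definite and write ‖y‖_P² = yᵀPy. Let f : ℝⁿ → ℝⁿ with f(0) = 0, g : ℝⁿ → ℝ^{n×m}, R(x) symmetric positive definite, 0 < γ ≤ 1, M(x) = R(x) + γ g(x)ᵀPg(x), and Q(x) = ‖x‖_P² − γ‖f(x)‖_P² + γ² f(x)ᵀPg(x) M(x)⁻¹ g(x)ᵀPf(x). If there is L > 0 such that ‖f(x)‖_P² ≤ L‖x‖_P² for all x ∈ ℝⁿ and γ ≤ 1/L, then Q(x) ≥ 0 for all x ∈ ℝⁿ and Q(0) = 0. -/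
open Matrix

/-!
The three terms of `Q` are handled separately. The growth bound together with `γ L ≤ 1` gives
`γ ‖f x‖_P² ≤ ‖x‖_P²`. The last term is the quadratic form of `M⁻¹` at `v = gᵀ P f`, and
`M = R + γ gᵀ P g` is positive semidefinite, hence so is `M⁻¹`. At `x = 0` every term vanishes
because `f 0 = 0`.
-/

namespace Matrix

variable {ι κ : Type*} [Fintype ι] [Fintype κ]

theorem dotProduct_mulVec_mulVec_of_transpose_eq {P : Matrix ι ι ℝ} (hP : Pᵀ = P)
    (G : Matrix ι κ ℝ) (u : ι → ℝ) (w : κ → ℝ) :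
    u ⬝ᵥ (P *ᵥ (G *ᵥ w)) = (Gᵀ *ᵥ (P *ᵥ u)) ⬝ᵥ w := by
  rw [dotProduct_mulVec, dotProduct_mulVec, mulVec_transpose, ← hP, mulVec_transpose, hP]

theorem PosSemidef.add_smul_transpose_mul_mul {R : Matrix κ κ ℝ} (hR : R.PosSemidef)
    {P : Matrix ι ι ℝ} (hP : P.PosSemidef) (G : Matrix ι κ ℝ) {γ : ℝ} (hγ : 0 ≤ γ) :
    (R + γ • (Gᵀ * P * G)).PosSemidef := by
  refine hR.add (PosSemidef.smul ?_ hγ)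
  simpa only [conjTranspose_eq_transpose_of_trivial] using hP.conjTranspose_mul_mul_same G

theorem PosSemidef.dotProduct_mulVec_mulVec_inv_nonneg [DecidableEq κ] {P : Matrix ι ι ℝ}
    (hP : P.PosSemidef) {M : Matrix κ κ ℝ} (hM : M.PosSemidef) (G : Matrix ι κ ℝ)
    (u : ι → ℝ) : 0 ≤ u ⬝ᵥ (P *ᵥ (G *ᵥ (M⁻¹ *ᵥ (Gᵀ *ᵥ (P *ᵥ u))))) := by
  have hPt : Pᵀ = P := by simpa only [conjTranspose_eq_transpose_of_trivial] using hP.1.eq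
  rw [dotProduct_mulVec_mulVec_of_transpose_eq hPt]
  simpa only [star_trivial] using hM.inv.dotProduct_mulVec_nonneg (Gᵀ *ᵥ (P *ᵥ u))

end Matrix

theorem discrete_Q_nonneg_general
    {n m : ℕ} (P : Matrix (Fin n) (Fin n) ℝ) (hP : P.PosDef)
    (f : (Fin n → ℝ) → (Fin n → ℝ)) (hf0 : f 0 = 0)
    (g : (Fin n → ℝ) → Matrix (Fin n) (Fin m) ℝ)
    (R : (Fin n → ℝ) → Matrix (Fin m) (Fin m) ℝ)
    (hR : ∀ x, (R x).PosDef)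
    (γ : ℝ) (hγ0 : 0 < γ)
    (M : (Fin n → ℝ) → Matrix (Fin m) (Fin m) ℝ)
    (hM : ∀ x, M x = R x + γ • ((g x)ᵀ * P * g x))
    (Q : (Fin n → ℝ) → ℝ)
    (hQ : ∀ x, Q x = x ⬝ᵥ (P *ᵥ x) - γ * (f x ⬝ᵥ (P *ᵥ f x))
        + γ ^ 2 * (f x ⬝ᵥ (P *ᵥ (g x *ᵥ ((M x)⁻¹ *ᵥ ((g x)ᵀ *ᵥ (P *ᵥ f x)))))))
    (L : ℝ) (hL : 0 < L)
    (hLip : ∀ x : Fin n → ℝ, f x ⬝ᵥ (P *ᵥ f x) ≤ L * (x ⬝ᵥ (P *ᵥ x)))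
    (hγL : γ ≤ 1 / L) :
    (∀ x : Fin n → ℝ, 0 ≤ Q x) ∧ Q 0 = 0 := by
  have hγL' : γ * L ≤ 1 := (le_div_iff₀ hL).mp hγL
  refine ⟨fun x => ?_, by simp [hQ, hf0]⟩
  have hdiscount : γ * (f x ⬝ᵥ (P *ᵥ f x)) ≤ x ⬝ᵥ (P *ᵥ x) := by
    have hx : 0 ≤ x ⬝ᵥ (P *ᵥ x) := by
      simpa only [star_trivial] using hP.posSemidef.dotProduct_mulVec_nonneg x
    calc γ * (f x ⬝ᵥ (P *ᵥ f x)) ≤ γ * (L * (x ⬝ᵥ (P *ᵥ x))) :=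
          mul_le_mul_of_nonneg_left (hLip x) hγ0.le
      _ = (γ * L) * (x ⬝ᵥ (P *ᵥ x)) := (mul_assoc _ _ _).symm
      _ ≤ x ⬝ᵥ (P *ᵥ x) := mul_le_of_le_one_left hx hγL'
  have hMx : (M x).PosSemidef := by
    rw [hM x]
    exact (hR x).posSemidef.add_smul_transpose_mul_mul hP.posSemidef (g x) hγ0.le
  have hcross := hP.posSemidef.dotProduct_mulVec_mulVec_inv_nonneg hMx (g x) (f x)
  rw [hQ x]
  exact add_nonneg (sub_nonneg.mpr hdiscount) (mul_nonneg (sq_nonneg γ) hcross)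

/-- Nonnegativity of the discrete-time inverse-optimal state weight (Theorem 1):
if `‖f x‖_P² ≤ L ‖x‖_P²` for all `x` and `γ ≤ 1/L`, then
`Q x = ‖x‖_P² - γ‖f x‖_P² + γ² fᵀPg M⁻¹ gᵀPf ≥ 0` and `Q 0 = 0`. -/
theorem discrete_Q_nonneg
    {n m : ℕ} (P : Matrix (Fin n) (Fin n) ℝ) (hP : P.PosDef)
    (f : (Fin n → ℝ) → (Fin n → ℝ)) (hf0 : f 0 = 0)
    (g : (Fin n → ℝ) → Matrix (Fin n) (Fin m) ℝ)
    (R : (Fin n → ℝ) → Matrix (Fin m) (Fin m) ℝ)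
    (hR : ∀ x, (R x).PosDef)
    (γ : ℝ) (hγ0 : 0 < γ) (hγ1 : γ ≤ 1)
    (M : (Fin n → ℝ) → Matrix (Fin m) (Fin m) ℝ)
    (hM : ∀ x, M x = R x + γ • ((g x)ᵀ * P * g x))
    (Q : (Fin n → ℝ) → ℝ)
    (hQ : ∀ x, Q x = x ⬝ᵥ (P *ᵥ x) - γ * (f x ⬝ᵥ (P *ᵥ f x))
        + γ ^ 2 * (f x ⬝ᵥ (P *ᵥ (g x *ᵥ ((M x)⁻¹ *ᵥ ((g x)ᵀ *ᵥ (P *ᵥ f x)))))))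
    (L : ℝ) (hL : 0 < L)
    (hLip : ∀ x : Fin n → ℝ, f x ⬝ᵥ (P *ᵥ f x) ≤ L * (x ⬝ᵥ (P *ᵥ x)))
    (hγL : γ ≤ 1 / L) :
    (∀ x : Fin n → ℝ, 0 ≤ Q x) ∧ Q 0 = 0 :=
  discrete_Q_nonneg_general P hP f hf0 g R hR γ hγ0 M hM Q hQ L hL hLip hγL
end

section
/- Let P ∈ ℝ^{n×n} be symmetric positive definite with ‖a‖_P = √(aᵀPa), let f : ℝⁿ → ℝⁿ, g : ℝⁿ → ℝ^{n×m}, R(x) symmetric positive definite, γ ≥ 0, and Q(x) = γ xᵀPx − 2xᵀPf(x) + xᵀPg(x)R(x)⁻¹g(x)ᵀPx. If there is L > 0 with ‖f(x)‖_P ≤ L‖x‖_P for all x (in particular f(0) = 0) and γ ≥ 2L, then Q(x) ≥ (γ − 2L)‖x‖_P² ≥ 0 for all x ∈ ℝⁿ, and Q(0) = 0. -/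
open Matrix

/-!
By Cauchy–Schwarz for the inner product `⟨x, y⟩_P = xᵀPy` and the bound on `f`,
`2xᵀPf(x) ≤ 2‖x‖_P ‖f(x)‖_P ≤ 2L‖x‖_P²`, while the control term equals `vᵀR(x)⁻¹v`
with `v = g(x)ᵀPx`, which is nonnegative since `R(x)⁻¹` is positive definite.
-/

variable {ι κ : Type*} [Fintype ι] [Fintype κ]

theorem Matrix.PosSemidef.dotProduct_mulVec_le_sqrt_mul_sqrt {M : Matrix ι ι ℝ}
    (hM : M.PosSemidef) (x y : ι → ℝ) :
    x ⬝ᵥ (M *ᵥ y) ≤ √(x ⬝ᵥ (M *ᵥ x)) * √(y ⬝ᵥ (M *ᵥ y)) := by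
  let := M.toSeminormedAddCommGroup hM
  let := M.toInnerProductSpace hM
  rw [dotProduct_comm x, dotProduct_comm x (M *ᵥ x), dotProduct_comm y]
  exact real_inner_le_norm x y

theorem Matrix.IsSymm.dotProduct_mulVec_comm {M : Matrix ι ι ℝ} (hM : M.IsSymm)
    (x y : ι → ℝ) : x ⬝ᵥ (M *ᵥ y) = (M *ᵥ x) ⬝ᵥ y := by
  rw [dotProduct_mulVec, ← vecMul_transpose, hM.eq]

theorem Matrix.PosSemidef.dotProduct_mulVec_transpose_nonneg {S : Matrix κ κ ℝ}
    (hS : S.PosSemidef) (B : Matrix ι κ ℝ) (v : ι → ℝ) :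
    0 ≤ v ⬝ᵥ (B *ᵥ (S *ᵥ (Bᵀ *ᵥ v))) := by
  rw [dotProduct_mulVec, ← mulVec_transpose]
  exact hS.dotProduct_mulVec_nonneg (Bᵀ *ᵥ v)

theorem continuous_Q_nonneg_general
    {n m : ℕ} (P : Matrix (Fin n) (Fin n) ℝ) (hP : P.PosDef)
    (f : (Fin n → ℝ) → (Fin n → ℝ))
    (g : (Fin n → ℝ) → Matrix (Fin n) (Fin m) ℝ)
    (R : (Fin n → ℝ) → Matrix (Fin m) (Fin m) ℝ)
    (hR : ∀ x, (R x).PosDef)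
    (γ : ℝ)
    (Q : (Fin n → ℝ) → ℝ)
    (hQ : ∀ x, Q x = γ * (x ⬝ᵥ (P *ᵥ x)) - 2 * (x ⬝ᵥ (P *ᵥ f x))
        + x ⬝ᵥ (P *ᵥ (g x *ᵥ ((R x)⁻¹ *ᵥ ((g x)ᵀ *ᵥ (P *ᵥ x))))))
    (L : ℝ)
    (hLip : ∀ x : Fin n → ℝ,
        Real.sqrt (f x ⬝ᵥ (P *ᵥ f x)) ≤ L * Real.sqrt (x ⬝ᵥ (P *ᵥ x)))
    (hγL : 2 * L ≤ γ) :
    (∀ x : Fin n → ℝ,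
        (γ - 2 * L) * (x ⬝ᵥ (P *ᵥ x)) ≤ Q x ∧ 0 ≤ (γ - 2 * L) * (x ⬝ᵥ (P *ᵥ x))) ∧
    Q 0 = 0 := by
  have hPx (x : Fin n → ℝ) : 0 ≤ x ⬝ᵥ (P *ᵥ x) := hP.posSemidef.dotProduct_mulVec_nonneg x
  refine ⟨fun x => ?_, by simp [hQ]⟩
  have hcross : x ⬝ᵥ (P *ᵥ f x) ≤ L * (x ⬝ᵥ (P *ᵥ x)) :=
    calc x ⬝ᵥ (P *ᵥ f x)
        ≤ √(x ⬝ᵥ (P *ᵥ x)) * √(f x ⬝ᵥ (P *ᵥ f x)) :=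
          hP.posSemidef.dotProduct_mulVec_le_sqrt_mul_sqrt x (f x)
      _ ≤ √(x ⬝ᵥ (P *ᵥ x)) * (L * √(x ⬝ᵥ (P *ᵥ x))) := by gcongr; exact hLip x
      _ = L * (x ⬝ᵥ (P *ᵥ x)) := by rw [mul_left_comm, Real.mul_self_sqrt (hPx x)]
  have hcontrol : 0 ≤ x ⬝ᵥ (P *ᵥ (g x *ᵥ ((R x)⁻¹ *ᵥ ((g x)ᵀ *ᵥ (P *ᵥ x))))) := by
    rw [(isHermitian_iff_isSymm.mp hP.isHermitian).dotProduct_mulVec_comm]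
    exact (hR x).inv.posSemidef.dotProduct_mulVec_transpose_nonneg (g x) (P *ᵥ x)
  have hmargin := mul_nonneg (sub_nonneg.mpr hγL) (hPx x)
  exact ⟨by rw [hQ x]; linarith, hmargin⟩

/-- Nonnegativity of the continuous-time inverse-optimal state weight (Theorem 2):
if `‖f x‖_P ≤ L‖x‖_P` for all `x` and `γ ≥ 2L`, then
`Q x = γ xᵀPx - 2xᵀPf + xᵀPg R⁻¹ gᵀPx ≥ (γ - 2L)‖x‖_P² ≥ 0` and `Q 0 = 0`. -/
theorem continuous_Q_nonneg
    {n m : ℕ} (P : Matrix (Fin n) (Fin n) ℝ) (hP : P.PosDef)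
    (f : (Fin n → ℝ) → (Fin n → ℝ))
    (g : (Fin n → ℝ) → Matrix (Fin n) (Fin m) ℝ)
    (R : (Fin n → ℝ) → Matrix (Fin m) (Fin m) ℝ)
    (hR : ∀ x, (R x).PosDef)
    (γ : ℝ) (hγ : 0 ≤ γ)
    (Q : (Fin n → ℝ) → ℝ)
    (hQ : ∀ x, Q x = γ * (x ⬝ᵥ (P *ᵥ x)) - 2 * (x ⬝ᵥ (P *ᵥ f x))
        + x ⬝ᵥ (P *ᵥ (g x *ᵥ ((R x)⁻¹ *ᵥ ((g x)ᵀ *ᵥ (P *ᵥ x))))))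
    (L : ℝ) (hL : 0 < L)
    (hLip : ∀ x : Fin n → ℝ,
        Real.sqrt (f x ⬝ᵥ (P *ᵥ f x)) ≤ L * Real.sqrt (x ⬝ᵥ (P *ᵥ x)))
    (hγL : 2 * L ≤ γ) :
    (∀ x : Fin n → ℝ,
        (γ - 2 * L) * (x ⬝ᵥ (P *ᵥ x)) ≤ Q x ∧ 0 ≤ (γ - 2 * L) * (x ⬝ᵥ (P *ᵥ x))) ∧
    Q 0 = 0 :=
  continuous_Q_nonneg_general P hP f g R hR γ Q hQ L hLip hγL
end

section
/- Let P ∈ ℝ^{n×n} be symmetric positive definite with ⟨a,b⟩_P = aᵀPb, let m = 1 so g : ℝⁿ → ℝⁿ, and let R : ℝⁿ → ℝ with R(x) > 0. Define the closed-loop vector field F(x) = f(x) − R(x)⁻¹⟨g(x),x⟩_P g(x). Then for every x, 2⟨F(x),x⟩_P = 2[⟨f(x),x⟩_P − R(x)⁻¹⟨g(x),x⟩_P²]; moreover, if x ≠ 0 and either (⟨g(x),x⟩_P = 0 and ⟨f(x),x⟩_P < 0) or (⟨g(x),x⟩_P ≠ 0 and R(x)⟨f(x),x⟩_P < ⟨g(x),x⟩_P²),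 then ⟨F(x),x⟩_P < 0, so the squared P-norm ‖x(t)‖_P² = x(t)ᵀPx(t) is strictly decreasing along any solution of ẋ = F(x) passing through such x. -/
/-!
Bilinearity of `⟨·,·⟩_P` turns `⟨F x, x⟩_P` into `⟨f x, x⟩_P - R⁻¹ ⟨g x, x⟩_P²`, which, as `R > 0`,
is negative exactly when `R ⟨f x, x⟩_P < ⟨g x, x⟩_P²`; both cases of the hypothesis give this.
Because `P` is symmetric, the product rule gives `d/dt (ξᵀ P ξ) = 2 ⟨ξ', ξ⟩_P`.
-/

open Matrix

theorem Matrix.IsSymm.dotProduct_mulVec_comm_s14 {n R : Type*} [Fintype n] [CommSemiring R]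
    {A : Matrix n n R} (hA : A.IsSymm) (v w : n → R) :
    v ⬝ᵥ (A *ᵥ w) = w ⬝ᵥ (A *ᵥ v) := by
  rw [dotProduct_mulVec, ← mulVec_transpose, hA.eq, dotProduct_comm]

section Deriv

variable {𝕜 : Type*} [NontriviallyNormedField 𝕜] {ι : Type*} [Fintype ι]
  {u v : 𝕜 → ι → 𝕜} {u' v' : ι → 𝕜} {t : 𝕜}

theorem HasDerivAt.dotProduct (hu : HasDerivAt u u' t) (hv : HasDerivAt v v' t) :
    HasDerivAt (fun s ↦ u s ⬝ᵥ v s) (u' ⬝ᵥ v t + u t ⬝ᵥ v') t := by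
  simp only [_root_.dotProduct, ← Finset.sum_add_distrib]
  exact HasDerivAt.fun_sum fun i _ ↦
    (hasDerivAt_pi.mp hu i).mul (hasDerivAt_pi.mp hv i)

theorem HasDerivAt.const_mulVec {m : Type*} [Fintype m] (A : Matrix m ι 𝕜)
    (hu : HasDerivAt u u' t) : HasDerivAt (fun s ↦ A *ᵥ u s) (A *ᵥ u') t :=
  hasDerivAt_pi.mpr fun i ↦ by simpa [mulVec] using (hasDerivAt_const t (A i)).dotProduct hu

theorem HasDerivAt.dotProduct_mulVec_self {A : Matrix ι ι 𝕜} (hA : A.IsSymm)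
    (hu : HasDerivAt u u' t) :
    HasDerivAt (fun s ↦ u s ⬝ᵥ (A *ᵥ u s)) (2 * (u' ⬝ᵥ (A *ᵥ u t))) t :=
  (hu.dotProduct (hu.const_mulVec A)).congr_deriv <| by
    rw [hA.dotProduct_mulVec_comm_s14 (u t), two_mul]

end Deriv

theorem sub_inv_mul_neg_of_mul_lt {α : Type*} [Field α] [LinearOrder α] [IsStrictOrderedRing α]
    {r a b : α} (hr : 0 < r) (h : r * a < b) : a - r⁻¹ * b < 0 := by
  rwa [sub_neg, inv_mul_eq_div, lt_div_iff₀ hr, mul_comm]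

/-- Second part of Theorem 3 made precise: for the closed-loop vector field
`F x = f x - R(x)⁻¹⟨g x, x⟩_P g x`, one has
`2⟨F x, x⟩_P = 2[⟨f x, x⟩_P - R(x)⁻¹⟨g x, x⟩_P²]`; if `x ≠ 0` and either
(`⟨g x, x⟩_P = 0` and `⟨f x, x⟩_P < 0`) or (`⟨g x, x⟩_P ≠ 0` and
`R(x)⟨f x, x⟩_P < ⟨g x, x⟩_P²`), then `⟨F x, x⟩_P < 0`, so the squared
`P`-norm strictly decreases along any solution of `ẋ = F(x)` through such `x`
(its derivative `2⟨F(ξ t), ξ t⟩_P` is negative). -/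
theorem continuous_closed_loop_norm_decrease
    {n : ℕ} (P : Matrix (Fin n) (Fin n) ℝ) (hP : P.PosDef)
    (f g : (Fin n → ℝ) → (Fin n → ℝ))
    (R : (Fin n → ℝ) → ℝ) (hR : ∀ x, 0 < R x)
    (ip : (Fin n → ℝ) → (Fin n → ℝ) → ℝ)
    (hip : ∀ a b, ip a b = a ⬝ᵥ (P *ᵥ b))
    (F : (Fin n → ℝ) → (Fin n → ℝ))
    (hF : ∀ x, F x = f x - ((R x)⁻¹ * ip (g x) x) • g x) :
    (∀ x : Fin n → ℝ,
        2 * ip (F x) x = 2 * (ip (f x) x - (R x)⁻¹ * (ip (g x) x) ^ 2)) ∧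
    (∀ x : Fin n → ℝ, x ≠ 0 →
        ((ip (g x) x = 0 ∧ ip (f x) x < 0) ∨
          (ip (g x) x ≠ 0 ∧ R x * ip (f x) x < (ip (g x) x) ^ 2)) →
        ip (F x) x < 0) ∧
    (∀ (ξ : ℝ → (Fin n → ℝ)) (t : ℝ), HasDerivAt ξ (F (ξ t)) t →
        HasDerivAt (fun s => ξ s ⬝ᵥ (P *ᵥ ξ s)) (2 * ip (F (ξ t)) (ξ t)) t) := by
  have closed_loop : ∀ x, ip (F x) x = ip (f x) x - (R x)⁻¹ * ip (g x) x ^ 2 := by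
    intro x
    simp only [hip, hF, sub_dotProduct, smul_dotProduct, smul_eq_mul]
    ring
  refine ⟨fun x ↦ by rw [closed_loop], fun x _ hcase ↦ ?_, fun ξ t hξ ↦ ?_⟩
  · rw [closed_loop]
    refine sub_inv_mul_neg_of_mul_lt (hR x) ?_
    rcases hcase with ⟨hg, hf⟩ | ⟨-, hlt⟩
    · simpa [hg] using mul_neg_of_pos_of_neg (hR x) hf
    · exact hlt
  · rw [hip]
    exact hξ.dotProduct_mulVec_self (isHermitian_iff_isSymm.mp hP.1)
end
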